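/- Symmetric leakage bound: for finitely supported random variables v, v̂, d, if I(v̂; d) = 0 then min(I(v; d), I(v; v̂)) ≤ H(v)/2. -/

import Mathlib

/-!
The bound follows from `I(v; d) + I(v; v̂) ≤ H(v) + I(v̂; d)`, which rearranges to
`H(v̂, d) + H(v) ≤ H(v̂, v) + H(d, v)`: this is the nonnegativity of `I(v̂; d | v)` combined with
`H(v̂, d) ≤ H(v̂, d, v)`. Nonnegativity of `I(X; Y | Z)` is Gibbs' inequality, since it is the
relative entropy of the law `p(x, y, z)` with respect to `p(x, z) p(y, z) / p(z)`, and these two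
have the same total mass.
-/

open Finset

variable {Ω : Type*} [Fintype Ω]

/-- Probability that random variable `X` takes value `s`, under mass function `μ`. -/
noncomputable def probOf (μ : Ω → ℝ) {S : Type*} [DecidableEq S] (X : Ω → S) (s : S) : ℝ :=
  ∑ ω ∈ Finset.univ.filter fun ω => X ω = s, μ ω

/-- `μ` is a probability mass function on the finite sample space `Ω`. -/
def IsProbMass (μ : Ω → ℝ) : Prop := (∀ ω, 0 ≤ μ ω) ∧ ∑ ω, μ ω = 1

/-- Shannon entropy of a finitely supported random variable. -/
noncomputable def entropy (μ : Ω → ℝ) {S : Type*} [Fintype S] [DecidableEq S]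
    (X : Ω → S) : ℝ :=
  ∑ s : S, Real.negMulLog (probOf μ X s)

/-- Conditional Shannon entropy `H(X | Y) = H(X, Y) - H(Y)`. -/
noncomputable def condEntropy (μ : Ω → ℝ) {S T : Type*} [Fintype S] [DecidableEq S]
    [Fintype T] [DecidableEq T] (X : Ω → S) (Y : Ω → T) : ℝ :=
  entropy μ (fun ω => (X ω, Y ω)) - entropy μ Y

/-- Mutual information `I(X; Y) = H(X) + H(Y) - H(X, Y)`. -/
noncomputable def mutualInfo (μ : Ω → ℝ) {S T : Type*} [Fintype S] [DecidableEq S]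
    [Fintype T] [DecidableEq T] (X : Ω → S) (Y : Ω → T) : ℝ :=
  entropy μ X + entropy μ Y - entropy μ (fun ω => (X ω, Y ω))

/-- Conditional mutual information `I(X; Y | Z) = H(X,Z) + H(Y,Z) - H(X,Y,Z) - H(Z)`. -/
noncomputable def condMutualInfo (μ : Ω → ℝ) {S T U : Type*} [Fintype S] [DecidableEq S]
    [Fintype T] [DecidableEq T] [Fintype U] [DecidableEq U]
    (X : Ω → S) (Y : Ω → T) (Z : Ω → U) : ℝ :=
  entropy μ (fun ω => (X ω, Z ω)) + entropy μ (fun ω => (Y ω, Z ω))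
    - entropy μ (fun ω => (X ω, Y ω, Z ω)) - entropy μ Z

/-- Independence of two random variables: the joint distribution factorizes. -/
def IndepRV (μ : Ω → ℝ) {S T : Type*} [DecidableEq S] [DecidableEq T]
    (X : Ω → S) (Y : Ω → T) : Prop :=
  ∀ s t, probOf μ (fun ω => (X ω, Y ω)) (s, t) = probOf μ X s * probOf μ Y t

open Real

lemma negMulLog_add_le {a b : ℝ} (ha : 0 ≤ a) (hb : 0 ≤ b) :
    negMulLog (a + b) ≤ negMulLog a + negMulLog b := by
  have hlog {x : ℝ} (hx : 0 ≤ x) (hxy : x ≤ a + b) : x * log x ≤ x * log (a + b) := by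
    rcases hx.eq_or_lt with rfl | hx
    · simp
    · exact mul_le_mul_of_nonneg_left (log_le_log hx hxy) hx.le
  simp only [negMulLog, neg_mul]
  linarith [hlog ha (le_add_of_nonneg_right hb), hlog hb (le_add_of_nonneg_left ha)]

lemma negMulLog_sum_le {ι : Type*} (s : Finset ι) (f : ι → ℝ) (hf : ∀ i ∈ s, 0 ≤ f i) :
    negMulLog (∑ i ∈ s, f i) ≤ ∑ i ∈ s, negMulLog (f i) :=
  le_sum_of_subadditive_on_pred negMulLog (0 ≤ ·) negMulLog_zero.le
    (fun _ _ => negMulLog_add_le) (fun _ _ => add_nonneg) f hf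

lemma sub_le_mul_log_div {a b : ℝ} (ha : 0 ≤ a) (hb : 0 ≤ b) (hab : b = 0 → a = 0) :
    a - b ≤ a * log (a / b) := by
  rcases hb.eq_or_lt with rfl | hb
  · simp [hab rfl]
  calc a - b = b * (a / b - 1) := by field_simp
    _ ≤ b * (a / b * log (a / b)) := by gcongr; exact self_sub_one_le_mul_log (by positivity)
    _ = a * log (a / b) := by field_simp

section Distribution

variable {μ : Ω → ℝ} {S T U : Type*} [DecidableEq S] [DecidableEq T] [DecidableEq U]

lemma probOf_nonneg (hμ : ∀ ω, 0 ≤ μ ω) (X : Ω → S) (s : S) : 0 ≤ probOf μ X s :=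
  sum_nonneg fun ω _ => hμ ω

lemma sum_probOf [Fintype S] (X : Ω → S) : ∑ s, probOf μ X s = ∑ ω, μ ω :=
  sum_fiberwise _ _ _

lemma sum_probOf_pair [Fintype S] (X : Ω → S) (Y : Ω → T) (t : T) :
    ∑ s, probOf μ (fun ω => (X ω, Y ω)) (s, t) = probOf μ Y t := by
  simp only [probOf, sum_filter]
  rw [sum_comm]
  refine sum_congr rfl fun ω _ => ?_
  simp [Prod.ext_iff, ite_and]

lemma probOf_comp [Fintype S] (X : Ω → S) (f : S → T) (t : T) :
    probOf μ (fun ω => f (X ω)) t = ∑ s with f s = t, probOf μ X s := by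
  rw [probOf, ← sum_fiberwise_of_maps_to (g := X) (t := {s | f s = t}) (by simp)]
  refine sum_congr rfl fun s hs => ?_
  rw [probOf, filter_filter]
  congr 1
  ext ω
  simp only [mem_filter, mem_univ, true_and]
  exact ⟨And.right, fun h => ⟨h ▸ (mem_filter.1 hs).2, h⟩⟩

lemma probOf_le_probOf_comp [Fintype S] (hμ : ∀ ω, 0 ≤ μ ω) (X : Ω → S) (f : S → T) (s : S) :
    probOf μ X s ≤ probOf μ (fun ω => f (X ω)) (f s) := by
  rw [probOf_comp X f]
  exact single_le_sum (fun s _ => probOf_nonneg hμ X s) (by simp)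

lemma entropy_eq_neg_sum [Fintype S] (X : Ω → S) :
    entropy μ X = -∑ s, probOf μ X s * log (probOf μ X s) := by
  simp [entropy, negMulLog, sum_neg_distrib]

lemma entropy_comp_eq_neg_sum [Fintype S] [Fintype T] (X : Ω → S) (f : S → T) :
    entropy μ (fun ω => f (X ω))
      = -∑ s, probOf μ X s * log (probOf μ (fun ω => f (X ω)) (f s)) := by
  rw [entropy_eq_neg_sum, ← sum_fiberwise univ f]
  congr 1
  refine sum_congr rfl fun t _ => ?_
  rw [probOf_comp X f, sum_mul]
  exact sum_congr rfl fun s hs => by rw [(mem_filter.1 hs).2, probOf_comp X f]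

lemma entropy_comp_le [Fintype S] [Fintype T] (hμ : ∀ ω, 0 ≤ μ ω) (X : Ω → S) (f : S → T) :
    entropy μ (fun ω => f (X ω)) ≤ entropy μ X := by
  rw [entropy, entropy, ← sum_fiberwise univ f]
  gcongr with t
  rw [probOf_comp X f]
  exact negMulLog_sum_le _ _ fun s _ => probOf_nonneg hμ X s

end Distribution

section CondMutualInfo

variable {μ : Ω → ℝ} {S T U : Type*} [Fintype S] [DecidableEq S] [Fintype T] [DecidableEq T]
  [Fintype U] [DecidableEq U]

noncomputable def condIndepJoint (μ : Ω → ℝ) (X : Ω → S) (Y : Ω → T) (Z : Ω → U)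
    (w : S × T × U) : ℝ :=
  probOf μ (fun ω => (X ω, Z ω)) (w.1, w.2.2) * probOf μ (fun ω => (Y ω, Z ω)) (w.2.1, w.2.2)
    / probOf μ Z w.2.2

lemma sum_condIndepJoint (X : Ω → S) (Y : Ω → T) (Z : Ω → U) :
    ∑ w, condIndepJoint μ X Y Z w = ∑ ω, μ ω := by
  calc ∑ w, condIndepJoint μ X Y Z w
      = ∑ z, ∑ x, ∑ y, probOf μ (fun ω => (X ω, Z ω)) (x, z)
          * probOf μ (fun ω => (Y ω, Z ω)) (y, z) / probOf μ Z z := by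
        simp only [condIndepJoint, Fintype.sum_prod_type]
        exact (sum_congr rfl fun x _ => sum_comm).trans sum_comm
    _ = ∑ z, probOf μ Z z * probOf μ Z z / probOf μ Z z := by
        simp only [← sum_div, ← sum_mul_sum, sum_probOf_pair]
    _ = ∑ ω, μ ω := by simp only [mul_self_div_self, sum_probOf]

lemma probOf_marginals_pos (hμ : ∀ ω, 0 ≤ μ ω) (X : Ω → S) (Y : Ω → T) (Z : Ω → U)
    {w : S × T × U} (hw : 0 < probOf μ (fun ω => (X ω, Y ω, Z ω)) w) :
    0 < probOf μ (fun ω => (X ω, Z ω)) (w.1, w.2.2)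
      ∧ 0 < probOf μ (fun ω => (Y ω, Z ω)) (w.2.1, w.2.2) ∧ 0 < probOf μ Z w.2.2 :=
  ⟨hw.trans_le (probOf_le_probOf_comp hμ _ (fun w => (w.1, w.2.2)) w),
    hw.trans_le (probOf_le_probOf_comp hμ _ (fun w => (w.2.1, w.2.2)) w),
    hw.trans_le (probOf_le_probOf_comp hμ _ (fun w => w.2.2) w)⟩

lemma condMutualInfo_eq_sum_mul_log_div (hμ : ∀ ω, 0 ≤ μ ω)
    (X : Ω → S) (Y : Ω → T) (Z : Ω → U) :
    condMutualInfo μ X Y Z = ∑ w, probOf μ (fun ω => (X ω, Y ω, Z ω)) w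
      * log (probOf μ (fun ω => (X ω, Y ω, Z ω)) w / condIndepJoint μ X Y Z w) := by
  set W := fun ω => (X ω, Y ω, Z ω)
  have hXZ : entropy μ (fun ω => (X ω, Z ω)) = -∑ w, probOf μ W w
      * log (probOf μ (fun ω => (X ω, Z ω)) (w.1, w.2.2)) :=
    entropy_comp_eq_neg_sum W (fun w => (w.1, w.2.2))
  have hYZ : entropy μ (fun ω => (Y ω, Z ω)) = -∑ w, probOf μ W w
      * log (probOf μ (fun ω => (Y ω, Z ω)) (w.2.1, w.2.2)) :=
    entropy_comp_eq_neg_sum W (fun w => (w.2.1, w.2.2))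
  have hZ : entropy μ Z = -∑ w, probOf μ W w * log (probOf μ Z w.2.2) :=
    entropy_comp_eq_neg_sum W (fun w => w.2.2)
  have hlog : ∀ w, probOf μ W w * log (probOf μ W w / condIndepJoint μ X Y Z w)
      = probOf μ W w * log (probOf μ W w) + probOf μ W w * log (probOf μ Z w.2.2)
        - probOf μ W w * log (probOf μ (fun ω => (X ω, Z ω)) (w.1, w.2.2))
        - probOf μ W w * log (probOf μ (fun ω => (Y ω, Z ω)) (w.2.1, w.2.2)) := by
    intro w
    rcases (probOf_nonneg hμ W w).eq_or_lt with hw | hw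
    · simp [← hw]
    obtain ⟨hXZ, hYZ, hZ⟩ := probOf_marginals_pos hμ X Y Z hw
    rw [condIndepJoint, log_div hw.ne' (by positivity), log_div (by positivity) hZ.ne',
      log_mul hXZ.ne' hYZ.ne']
    ring
  rw [condMutualInfo, hXZ, hYZ, hZ, entropy_eq_neg_sum W, sum_congr rfl fun w _ => hlog w]
  simp only [sum_add_distrib, sum_sub_distrib]
  ring

lemma condMutualInfo_nonneg (hμ : ∀ ω, 0 ≤ μ ω) (X : Ω → S) (Y : Ω → T) (Z : Ω → U) :
    0 ≤ condMutualInfo μ X Y Z := by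
  set p := probOf μ (fun ω => (X ω, Y ω, Z ω))
  set q := condIndepJoint μ X Y Z
  have hq : ∀ w, 0 ≤ q w := fun w =>
    div_nonneg (mul_nonneg (probOf_nonneg hμ _ _) (probOf_nonneg hμ _ _)) (probOf_nonneg hμ _ _)
  have hpq : ∀ w, q w = 0 → p w = 0 := by
    intro w hqw
    by_contra hpw
    obtain ⟨hXZ, hYZ, hZ⟩ :=
      probOf_marginals_pos hμ X Y Z ((probOf_nonneg hμ _ w).lt_of_ne' hpw)
    exact (show 0 < q w by unfold q condIndepJoint; positivity).ne' hqw
  rw [condMutualInfo_eq_sum_mul_log_div hμ]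
  calc 0 = ∑ w, (p w - q w) := by rw [sum_sub_distrib, sum_probOf, sum_condIndepJoint, sub_self]
    _ ≤ ∑ w, p w * log (p w / q w) :=
      sum_le_sum fun w _ => sub_le_mul_log_div (probOf_nonneg hμ _ w) (hq w) (hpq w)

lemma mutualInfo_add_mutualInfo_le (hμ : ∀ ω, 0 ≤ μ ω) (X : Ω → S) (Y : Ω → T) (Z : Ω → U) :
    mutualInfo μ X Y + mutualInfo μ X Z ≤ entropy μ X + mutualInfo μ Y Z := by
  have hcmi := condMutualInfo_nonneg hμ Y Z X
  have hYZ : entropy μ (fun ω => (Y ω, Z ω)) ≤ entropy μ (fun ω => (Y ω, Z ω, X ω)) :=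
    entropy_comp_le hμ (fun ω => (Y ω, Z ω, X ω)) fun w => (w.1, w.2.1)
  have hXY : entropy μ (fun ω => (Y ω, X ω)) ≤ entropy μ (fun ω => (X ω, Y ω)) :=
    entropy_comp_le hμ (fun ω => (X ω, Y ω)) Prod.swap
  have hXZ : entropy μ (fun ω => (Z ω, X ω)) ≤ entropy μ (fun ω => (X ω, Z ω)) :=
    entropy_comp_le hμ (fun ω => (X ω, Z ω)) Prod.swap
  rw [condMutualInfo] at hcmi
  rw [mutualInfo, mutualInfo, mutualInfo]
  linarith

end CondMutualInfo

theorem symmetric_leakage_bound {V VH D : Type*} [Fintype V] [DecidableEq V] [Fintype VH] [DecidableEq VH] [Fintype D] [DecidableEq D] (μ : Ω → ℝ) (hμ : IsProbMass μ) (v : Ω → V) (vh : Ω → VH) (d : Ω → D)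
    (h : mutualInfo μ vh d = 0) :
    min (mutualInfo μ v d) (mutualInfo μ v vh) ≤ entropy μ v / 2 := by
  have hsum := mutualInfo_add_mutualInfo_le hμ.1 v vh d
  rw [h, add_zero] at hsum
  rw [min_le_iff]
  by_contra! hlt
  linarith [hlt.1, hlt.2]
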